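/- In the general quasi-Newton scheme, for all k ≥ 0 one has (1/ξ_k)·∇²f(x_k) ⪯ G_k ⪯ ξ_k·(L/μ)·∇²f(x_k) and (1/ξ_{k+1})·J_k ⪯ G_k ⪯ ξ_{k+1}·(L/μ)·J_k. -/

import Mathlib

/-!
Write `H_k = ∇²f(x_k)`. For `q(t) = ⟨∇²f(x_k + t u_k) v, v⟩` strong self-concordance gives
`q(t) ≤ (1 + M r_k t) q(0)` and `q(0) ≤ (1 + M r_k t) q(t)` on `[0, 1]`; integrating (for the
lower bound after `1/(1 + s) ≥ e^{-s}` and Jensen for `exp`) shows that `J_k` lies within a factor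
`e^{M r_k / 2}` of `H_k` in the Loewner order, and by symmetry of the segment also of `H_{k+1}`.

Every Broyden update preserves a two-sided bound `α A ⪯ G ⪯ β A` with `α ≤ 1 ≤ β`: it is a
convex combination of the DFP and BFGS updates, whose quadratic forms at `v` are
`⟨G w, w⟩ + ⟨A u, v⟩² / ⟨A u, u⟩`, where `w = v - c u` is orthogonal to `u` for the inner product
of `A` (DFP) resp. `G` (BFGS), while `⟨A v, v⟩ = ⟨A w, w⟩ + ⟨A u, v⟩² / ⟨A u, u⟩` for the first
choice and `≤` for the second. Starting from `H_0 ⪯ L B ⪯ (L/μ) H_0` and passing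
`H_k → J_k → G_{k+1} → H_{k+1}`, each step widens both bounds by `e^{M r_k} = ξ_{k+1} / ξ_k`.
-/

open Matrix Finset

/-- The Broyden family update of a Hessian approximation `G` with respect to
the target matrix `A` along direction `u`, parameterized by `τ`. -/
noncomputable def broyd {n : ℕ} (τ : ℝ) (A G : Matrix (Fin n) (Fin n) ℝ) (u : Fin n → ℝ) :
    Matrix (Fin n) (Fin n) ℝ :=
  if u = 0 then G
  else
    let aUU : ℝ := u ⬝ᵥ A.mulVec u
    let gUU : ℝ := u ⬝ᵥ G.mulVec u
    let agaUU : ℝ := u ⬝ᵥ (A * G⁻¹ * A).mulVec u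
    let ρ : ℝ := gUU / aUU
    let φ : ℝ := τ * (aUU / agaUU) / (τ * (aUU / agaUU) + (1 - τ) * ρ)
    φ • (G - aUU⁻¹ • (A * vecMulVec u u * G + G * vecMulVec u u * A)
          + ((ρ + 1) / aUU) • (A * vecMulVec u u * A)) +
    (1 - φ) • (G - gUU⁻¹ • (G * vecMulVec u u * G) + aUU⁻¹ • (A * vecMulVec u u * A))

/-- `psdLE P Q` (i.e. `P ⪯ Q`) : the matrix `Q - P` is positive semidefinite. -/
def psdLE {n : ℕ} (P Q : Matrix (Fin n) (Fin n) ℝ) : Prop := (Q - P).PosSemidef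

/-- The closeness measure ν(A, G, u). -/
noncomputable def nuMeas {n : ℕ} (A G : Matrix (Fin n) (Fin n) ℝ) (u : Fin n → ℝ) : ℝ :=
  Real.sqrt ((u ⬝ᵥ ((G - A) * G⁻¹ * (G - A)).mulVec u) / (u ⬝ᵥ A.mulVec u))

/-- The log-det barrier V(A, G) = ln det (A⁻¹ G). -/
noncomputable def logDetBarrier {n : ℕ} (A G : Matrix (Fin n) (Fin n) ℝ) : ℝ :=
  Real.log (A⁻¹ * G).det

/-- The augmented log-det barrier ψ(G, A) = ln det (A⁻¹ G) - tr (G⁻¹ (G - A)). -/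
noncomputable def psiBarrier {n : ℕ} (G A : Matrix (Fin n) (Fin n) ℝ) : ℝ :=
  Real.log (A⁻¹ * G).det - (G⁻¹ * (G - A)).trace

/-- The Hessian matrix of `f` at `x` (second derivative in coordinate directions). -/
noncomputable def hessF {n : ℕ} (f : (Fin n → ℝ) → ℝ) (x : Fin n → ℝ) :
    Matrix (Fin n) (Fin n) ℝ :=
  Matrix.of fun i j => fderiv ℝ (fderiv ℝ f) x (Pi.single i 1) (Pi.single j 1)

/-- The gradient of `f` at `x`. -/
noncomputable def gradF {n : ℕ} (f : (Fin n → ℝ) → ℝ) (x : Fin n → ℝ) : Fin n → ℝ :=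
  fun i => fderiv ℝ f x (Pi.single i 1)

/-- `f` is `M`-strongly self-concordant:
`∇²f(y) − ∇²f(x) ⪯ M‖y−x‖_z ∇²f(w)` for all `x, y, z, w`. -/
def StronglySelfConcordant {n : ℕ} (f : (Fin n → ℝ) → ℝ) (M : ℝ) : Prop :=
  ∀ x y z w : Fin n → ℝ,
    psdLE (hessF f y - hessF f x)
      ((M * Real.sqrt ((y - x) ⬝ᵥ (hessF f z).mulVec (y - x))) • hessF f w)

open scoped MatrixOrder

theorem psdLE_iff_le {n : ℕ} {P Q : Matrix (Fin n) (Fin n) ℝ} : psdLE P Q ↔ P ≤ Q := Iff.rfl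

namespace Matrix

variable {ι : Type*}

theorem IsHermitian.of_le {P Q : Matrix ι ι ℝ} (hP : P.IsHermitian) (h : P ≤ Q) :
    Q.IsHermitian := by
  simpa using hP.add (le_iff.mp h).isHermitian

variable [Fintype ι]

theorem dotProduct_mulVec_le_of_le {P Q : Matrix ι ι ℝ} (h : P ≤ Q) (v : ι → ℝ) :
    v ⬝ᵥ P *ᵥ v ≤ v ⬝ᵥ Q *ᵥ v := by
  simpa [sub_mulVec] using (le_iff.mp h).dotProduct_mulVec_nonneg v

theorem le_iff_dotProduct_mulVec_le {P Q : Matrix ι ι ℝ} (hP : P.IsHermitian)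
    (hQ : Q.IsHermitian) : P ≤ Q ↔ ∀ v, v ⬝ᵥ P *ᵥ v ≤ v ⬝ᵥ Q *ᵥ v := by
  refine ⟨dotProduct_mulVec_le_of_le, fun h => ?_⟩
  exact le_iff.mpr <| .of_dotProduct_mulVec_nonneg (hQ.sub hP) fun v => by
    simpa [sub_mulVec] using h v

theorem PosDef.le_of_smul_le_smul [Nonempty ι] {B : Matrix ι ι ℝ} (hB : B.PosDef) {a b : ℝ}
    (h : a • B ≤ b • B) : a ≤ b := by
  have hv : (fun _ => 1 : ι → ℝ) ≠ 0 := fun h0 => by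
    simpa using congrFun h0 (Classical.arbitrary ι)
  have hpos := hB.dotProduct_mulVec_pos hv
  have hle := dotProduct_mulVec_le_of_le h (fun _ => 1)
  simp only [star_trivial] at hpos
  simp only [smul_mulVec, dotProduct_smul, smul_eq_mul] at hle
  exact le_of_mul_le_mul_right hle hpos

theorem sqrt_dotProduct_smul_mulVec (X : Matrix ι ι ℝ) (t : ℝ) (u : ι → ℝ) :
    √((t • u) ⬝ᵥ X *ᵥ (t • u)) = |t| * √(u ⬝ᵥ X *ᵥ u) := by
  rw [smul_dotProduct, mulVec_smul, dotProduct_smul, smul_eq_mul, smul_eq_mul, ← mul_assoc, ← sq,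
    Real.sqrt_mul (sq_nonneg t), Real.sqrt_sq_eq_abs]

theorem dotProduct_mul_vecMulVec_mul_mulVec (X Y : Matrix ι ι ℝ) (u v : ι → ℝ) :
    v ⬝ᵥ (X * vecMulVec u u * Y) *ᵥ v = (v ⬝ᵥ X *ᵥ u) * (u ⬝ᵥ Y *ᵥ v) := by
  rw [← mulVec_mulVec, ← mulVec_mulVec, vecMulVec_mulVec]
  simp [mulVec_smul, dotProduct_smul, mul_comm]

theorem conjTranspose_mul_vecMulVec_mul (X Y : Matrix ι ι ℝ) (u : ι → ℝ) :
    (X * vecMulVec u u * Y)ᴴ = Yᴴ * vecMulVec u u * Xᴴ := by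
  simp [Matrix.mul_assoc]

namespace IsHermitian

variable {X : Matrix ι ι ℝ}

theorem dotProduct_mulVec_comm (hX : X.IsHermitian) (v w : ι → ℝ) :
    v ⬝ᵥ X *ᵥ w = w ⬝ᵥ X *ᵥ v := by
  rw [dotProduct_mulVec, ← vecMul_transpose, ← conjTranspose_eq_transpose_of_trivial, hX.eq,
    dotProduct_comm]

theorem dotProduct_sub_smul_mulVec (hX : X.IsHermitian) (u v : ι → ℝ) (e : ℝ) :
    (v - e • u) ⬝ᵥ X *ᵥ (v - e • u) =
      v ⬝ᵥ X *ᵥ v - 2 * e * (u ⬝ᵥ X *ᵥ v) + e ^ 2 * (u ⬝ᵥ X *ᵥ u) := by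
  simp only [mulVec_sub, mulVec_smul, dotProduct_sub, sub_dotProduct, dotProduct_smul,
    smul_dotProduct, smul_eq_mul, hX.dotProduct_mulVec_comm v u]
  ring

theorem dotProduct_mulVec_eq_of_proj (hX : X.IsHermitian) {u : ι → ℝ} (hu : u ⬝ᵥ X *ᵥ u ≠ 0)
    (v : ι → ℝ) :
    v ⬝ᵥ X *ᵥ v = (v - ((u ⬝ᵥ X *ᵥ v) / (u ⬝ᵥ X *ᵥ u)) • u) ⬝ᵥ X *ᵥ
        (v - ((u ⬝ᵥ X *ᵥ v) / (u ⬝ᵥ X *ᵥ u)) • u) + (u ⬝ᵥ X *ᵥ v) ^ 2 / (u ⬝ᵥ X *ᵥ u) := by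
  rw [hX.dotProduct_sub_smul_mulVec]
  field_simp
  ring

theorem dotProduct_mulVec_sub_le (hX : X.IsHermitian) {u : ι → ℝ} (hu : 0 < u ⬝ᵥ X *ᵥ u)
    (v : ι → ℝ) (e : ℝ) :
    v ⬝ᵥ X *ᵥ v - (u ⬝ᵥ X *ᵥ v) ^ 2 / (u ⬝ᵥ X *ᵥ u) ≤ (v - e • u) ⬝ᵥ X *ᵥ (v - e • u) := by
  have hsq : (v - e • u) ⬝ᵥ X *ᵥ (v - e • u) - (v ⬝ᵥ X *ᵥ v - (u ⬝ᵥ X *ᵥ v) ^ 2 / (u ⬝ᵥ X *ᵥ u))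
      = (e * (u ⬝ᵥ X *ᵥ u) - u ⬝ᵥ X *ᵥ v) ^ 2 / (u ⬝ᵥ X *ᵥ u) := by
    rw [hX.dotProduct_sub_smul_mulVec]
    field_simp
    ring
  exact sub_nonneg.1 (hsq ▸ div_nonneg (sq_nonneg _) hu.le)

end IsHermitian

end Matrix

section Loewner

variable {ι : Type*}

def LoewnerBetween (α β : ℝ) (A G : Matrix ι ι ℝ) : Prop := α • A ≤ G ∧ G ≤ β • A

namespace LoewnerBetween

variable {α β α' β' : ℝ} {A B C : Matrix ι ι ℝ}

theorem iff_dotProduct_mulVec [Fintype ι] (hA : A.IsHermitian) (hB : B.IsHermitian) :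
    LoewnerBetween α β A B ↔
      ∀ v, α * (v ⬝ᵥ A *ᵥ v) ≤ v ⬝ᵥ B *ᵥ v ∧ v ⬝ᵥ B *ᵥ v ≤ β * (v ⬝ᵥ A *ᵥ v) := by
  have hsmul (c : ℝ) : (c • A).IsHermitian := hA.smul (IsSelfAdjoint.all c)
  simp only [LoewnerBetween, Matrix.le_iff_dotProduct_mulVec_le (hsmul _) hB,
    Matrix.le_iff_dotProduct_mulVec_le hB (hsmul _), Matrix.smul_mulVec, dotProduct_smul,
    smul_eq_mul, forall_and]

theorem posDef (h : LoewnerBetween α β A B) (hA : A.PosDef) (hα : 0 < α) : B.PosDef := by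
  simpa using (hA.smul hα).add_posSemidef (Matrix.le_iff.mp h.1)

variable [Fintype ι] [DecidableEq ι]

theorem trans (hAB : LoewnerBetween α β A B) (hBC : LoewnerBetween α' β' B C) (hα' : 0 ≤ α')
    (hβ' : 0 ≤ β') : LoewnerBetween (α' * α) (β' * β) A C := by
  rw [LoewnerBetween, mul_smul, mul_smul]
  exact ⟨(smul_le_smul_of_nonneg_left hAB.1 hα').trans hBC.1,
    hBC.2.trans (smul_le_smul_of_nonneg_left hAB.2 hβ')⟩

theorem symm (h : LoewnerBetween α β A B) (hα : 0 < α) (hβ : 0 < β) :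
    LoewnerBetween β⁻¹ α⁻¹ B A := by
  constructor
  · simpa [smul_smul, hβ.ne'] using smul_le_smul_of_nonneg_left h.2 (inv_nonneg.2 hβ.le)
  · simpa [smul_smul, hα.ne'] using smul_le_smul_of_nonneg_left h.1 (inv_nonneg.2 hα.le)

theorem mono (h : LoewnerBetween α β A B) (hA : 0 ≤ A) (hα : α' ≤ α) (hβ : β ≤ β') :
    LoewnerBetween α' β' A B :=
  ⟨(smul_le_smul_of_nonneg_right hα hA).trans h.1, h.2.trans (smul_le_smul_of_nonneg_right hβ hA)⟩

end LoewnerBetween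

end Loewner

section Broyden

variable {ι : Type*} [Fintype ι] {A G : Matrix ι ι ℝ} {u : ι → ℝ} {α β : ℝ}

noncomputable def dfpUpdate (A G : Matrix ι ι ℝ) (u : ι → ℝ) : Matrix ι ι ℝ :=
  G - (u ⬝ᵥ A *ᵥ u)⁻¹ • (A * vecMulVec u u * G + G * vecMulVec u u * A)
    + (((u ⬝ᵥ G *ᵥ u) / (u ⬝ᵥ A *ᵥ u) + 1) / (u ⬝ᵥ A *ᵥ u)) • (A * vecMulVec u u * A)

noncomputable def bfgsUpdate (A G : Matrix ι ι ℝ) (u : ι → ℝ) : Matrix ι ι ℝ :=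
  G - (u ⬝ᵥ G *ᵥ u)⁻¹ • (G * vecMulVec u u * G) + (u ⬝ᵥ A *ᵥ u)⁻¹ • (A * vecMulVec u u * A)

theorem Matrix.IsHermitian.dfpUpdate (hA : A.IsHermitian) (hG : G.IsHermitian) :
    (dfpUpdate A G u).IsHermitian := by
  simp only [Matrix.IsHermitian, _root_.dfpUpdate, conjTranspose_add, conjTranspose_sub,
    conjTranspose_smul, conjTranspose_mul_vecMulVec_mul, hA.eq, hG.eq, star_trivial]
  rw [add_comm (G * vecMulVec u u * A)]

theorem Matrix.IsHermitian.bfgsUpdate (hA : A.IsHermitian) (hG : G.IsHermitian) :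
    (bfgsUpdate A G u).IsHermitian := by
  simp only [Matrix.IsHermitian, _root_.bfgsUpdate, conjTranspose_add, conjTranspose_sub,
    conjTranspose_smul, conjTranspose_mul_vecMulVec_mul, hA.eq, hG.eq, star_trivial]

theorem dotProduct_dfpUpdate_mulVec (hA : A.IsHermitian) (hG : G.IsHermitian)
    (hu : u ⬝ᵥ A *ᵥ u ≠ 0) (v : ι → ℝ) :
    v ⬝ᵥ dfpUpdate A G u *ᵥ v =
      (v - ((u ⬝ᵥ A *ᵥ v) / (u ⬝ᵥ A *ᵥ u)) • u) ⬝ᵥ G *ᵥ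
        (v - ((u ⬝ᵥ A *ᵥ v) / (u ⬝ᵥ A *ᵥ u)) • u) + (u ⬝ᵥ A *ᵥ v) ^ 2 / (u ⬝ᵥ A *ᵥ u) := by
  simp only [dfpUpdate, add_mulVec, sub_mulVec, smul_mulVec, dotProduct_add, dotProduct_sub,
    dotProduct_smul, smul_eq_mul, dotProduct_mul_vecMulVec_mul_mulVec,
    hA.dotProduct_mulVec_comm v u, hG.dotProduct_mulVec_comm v u, hG.dotProduct_sub_smul_mulVec]
  field_simp
  ring

theorem dotProduct_bfgsUpdate_mulVec (hA : A.IsHermitian) (hG : G.IsHermitian)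
    (hu : u ⬝ᵥ G *ᵥ u ≠ 0) (v : ι → ℝ) :
    v ⬝ᵥ bfgsUpdate A G u *ᵥ v =
      (v - ((u ⬝ᵥ G *ᵥ v) / (u ⬝ᵥ G *ᵥ u)) • u) ⬝ᵥ G *ᵥ
        (v - ((u ⬝ᵥ G *ᵥ v) / (u ⬝ᵥ G *ᵥ u)) • u) + (u ⬝ᵥ A *ᵥ v) ^ 2 / (u ⬝ᵥ A *ᵥ u) := by
  simp only [bfgsUpdate, add_mulVec, sub_mulVec, smul_mulVec, dotProduct_add, dotProduct_sub,
    dotProduct_smul, smul_eq_mul, dotProduct_mul_vecMulVec_mul_mulVec,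
    hA.dotProduct_mulVec_comm v u, hG.dotProduct_mulVec_comm v u, hG.dotProduct_sub_smul_mulVec]
  field_simp
  ring

theorem LoewnerBetween.dfpUpdate (h : LoewnerBetween α β A G) (hA : A.PosDef) (hu : u ≠ 0)
    (hα : α ≤ 1) (hβ : 1 ≤ β) : LoewnerBetween α β A (dfpUpdate A G u) := by
  have hG : G.IsHermitian := (hA.isHermitian.smul (IsSelfAdjoint.all α)).of_le h.1
  have hAu : 0 < u ⬝ᵥ A *ᵥ u := by simpa using hA.dotProduct_mulVec_pos hu
  rw [iff_dotProduct_mulVec hA.isHermitian hG] at h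
  rw [iff_dotProduct_mulVec hA.isHermitian (hA.isHermitian.dfpUpdate hG)]
  intro v
  have hp : 0 ≤ (u ⬝ᵥ A *ᵥ v) ^ 2 / (u ⬝ᵥ A *ᵥ u) := div_nonneg (sq_nonneg _) hAu.le
  obtain ⟨hlo, hhi⟩ := h (v - ((u ⬝ᵥ A *ᵥ v) / (u ⬝ᵥ A *ᵥ u)) • u)
  rw [dotProduct_dfpUpdate_mulVec hA.isHermitian hG hAu.ne',
    hA.isHermitian.dotProduct_mulVec_eq_of_proj hAu.ne' v]
  constructor <;> nlinarith

theorem LoewnerBetween.bfgsUpdate (h : LoewnerBetween α β A G) (hA : A.PosDef) (hG : G.PosDef)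
    (hu : u ≠ 0) (hα0 : 0 ≤ α) (hα : α ≤ 1) (hβ : 1 ≤ β) :
    LoewnerBetween α β A (bfgsUpdate A G u) := by
  have hAu : 0 < u ⬝ᵥ A *ᵥ u := by simpa using hA.dotProduct_mulVec_pos hu
  have hGu : 0 < u ⬝ᵥ G *ᵥ u := by simpa using hG.dotProduct_mulVec_pos hu
  rw [iff_dotProduct_mulVec hA.isHermitian hG.isHermitian] at h
  rw [iff_dotProduct_mulVec hA.isHermitian (hA.isHermitian.bfgsUpdate hG.isHermitian)]
  intro v
  set c := (u ⬝ᵥ A *ᵥ v) / (u ⬝ᵥ A *ᵥ u)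
  set d := (u ⬝ᵥ G *ᵥ v) / (u ⬝ᵥ G *ᵥ u)
  have hp : 0 ≤ (u ⬝ᵥ A *ᵥ v) ^ 2 / (u ⬝ᵥ A *ᵥ u) := div_nonneg (sq_nonneg _) hAu.le
  have hAc := hA.isHermitian.dotProduct_mulVec_eq_of_proj hAu.ne' v
  have hAd := hA.isHermitian.dotProduct_mulVec_sub_le hAu v d
  have hGdc : (v - d • u) ⬝ᵥ G *ᵥ (v - d • u) ≤ (v - c • u) ⬝ᵥ G *ᵥ (v - c • u) := by
    linarith [hG.isHermitian.dotProduct_mulVec_eq_of_proj hGu.ne' v,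
      hG.isHermitian.dotProduct_mulVec_sub_le hGu v c]
  rw [dotProduct_bfgsUpdate_mulVec hA.isHermitian hG.isHermitian hGu.ne']
  constructor
  · nlinarith [(h (v - d • u)).1]
  · nlinarith [(h (v - c • u)).2]

end Broyden

section Broyd

variable {n : ℕ} {A G : Matrix (Fin n) (Fin n) ℝ} {u : Fin n → ℝ} {τ : ℝ}

theorem broyd_mem_segment (hA : A.PosSemidef) (hG : G.PosDef) (hτ : τ ∈ Set.Icc (0 : ℝ) 1)
    (hu : u ≠ 0) : broyd τ A G u ∈ segment ℝ (dfpUpdate A G u) (bfgsUpdate A G u) := by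
  have hAu : 0 ≤ u ⬝ᵥ A *ᵥ u := by simpa using hA.dotProduct_mulVec_nonneg u
  have hGu : 0 ≤ u ⬝ᵥ G *ᵥ u := by simpa using hG.posSemidef.dotProduct_mulVec_nonneg u
  have hAGA : 0 ≤ u ⬝ᵥ (A * G⁻¹ * A) *ᵥ u := by
    have h := hG.inv.posSemidef.conjTranspose_mul_mul_same A
    rw [hA.isHermitian.eq] at h
    simpa using h.dotProduct_mulVec_nonneg u
  have hσ : 0 ≤ τ * ((u ⬝ᵥ A *ᵥ u) / (u ⬝ᵥ (A * G⁻¹ * A) *ᵥ u)) :=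
    mul_nonneg hτ.1 (div_nonneg hAu hAGA)
  have hρ : 0 ≤ (1 - τ) * ((u ⬝ᵥ G *ᵥ u) / (u ⬝ᵥ A *ᵥ u)) :=
    mul_nonneg (sub_nonneg.2 hτ.2) (div_nonneg hGu hAu)
  refine ⟨_, _, div_nonneg hσ (add_nonneg hσ hρ),
    sub_nonneg.2 (div_le_one_of_le₀ (le_add_of_nonneg_right hρ) (add_nonneg hσ hρ)),
    add_sub_cancel _ _, ?_⟩
  simp only [broyd, if_neg hu, dfpUpdate, bfgsUpdate]

theorem LoewnerBetween.broyd {α β : ℝ} (h : LoewnerBetween α β A G) (hA : A.PosDef)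
    (hG : G.PosDef) (hτ : τ ∈ Set.Icc (0 : ℝ) 1) (hα0 : 0 ≤ α) (hα : α ≤ 1) (hβ : 1 ≤ β) :
    LoewnerBetween α β A (broyd τ A G u) := by
  by_cases hu : u = 0
  · simpa [_root_.broyd, hu] using h
  · exact (convex_Icc (α • A) (β • A)).segment_subset (h.dfpUpdate hA hu hα hβ)
      (h.bfgsUpdate hA hG hu hα0 hα hβ) (broyd_mem_segment hA.posSemidef hG hτ hu)

end Broyd

section Integral

open intervalIntegral

theorem integral_affine_unitInterval (a b : ℝ) : ∫ t in (0 : ℝ)..1, (a + b * t) = a + b / 2 := by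
  rw [integral_add intervalIntegrable_const ((continuous_const_mul b).intervalIntegrable _ _),
    integral_const_mul]
  simp
  ring

variable {q : ℝ → ℝ} {c : ℝ}

theorem integral_unitInterval_le_of_le_one_add_mul (hq : Continuous q)
    (h : ∀ t ∈ Set.Icc (0 : ℝ) 1, q t ≤ (1 + c * t) * q 0) :
    ∫ t in (0 : ℝ)..1, q t ≤ (1 + c / 2) * q 0 :=
  calc ∫ t in (0 : ℝ)..1, q t ≤ ∫ t in (0 : ℝ)..1, (q 0 + c * q 0 * t) :=
        integral_mono_on zero_le_one (hq.intervalIntegrable _ _)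
          ((by fun_prop : Continuous _).intervalIntegrable _ _) fun t ht => by linarith [h t ht]
    _ = (1 + c / 2) * q 0 := by rw [integral_affine_unitInterval]; ring

theorem exp_neg_half_mul_le_integral_unitInterval (hq : Continuous q)
    (hq_nonneg : ∀ t ∈ Set.Icc (0 : ℝ) 1, 0 ≤ q t)
    (h : ∀ t ∈ Set.Icc (0 : ℝ) 1, q 0 ≤ (1 + c * t) * q t) :
    Real.exp (-(c / 2)) * q 0 ≤ ∫ t in (0 : ℝ)..1, q t := by
  set a := Real.exp (-(c / 2)) * q 0
  have hpt : ∀ t ∈ Set.Icc (0 : ℝ) 1, a * (1 + c / 2) + (-(a * c)) * t ≤ q t := by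
    intro t ht
    have htan : Real.exp (-(c / 2)) * (1 + c / 2 - c * t) ≤ Real.exp (-(c * t)) := by
      have := mul_le_mul_of_nonneg_left (Real.add_one_le_exp (c / 2 - c * t))
        (Real.exp_pos (-(c / 2))).le
      rw [← Real.exp_add, show -(c / 2) + (c / 2 - c * t) = -(c * t) by ring] at this
      linarith
    have hinv : Real.exp (-(c * t)) * (1 + c * t) ≤ 1 := by
      have := mul_le_mul_of_nonneg_left (Real.add_one_le_exp (c * t))
        (Real.exp_pos (-(c * t))).le
      rwa [← Real.exp_add, neg_add_cancel, Real.exp_zero, add_comm] at this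
    have hq0 := hq_nonneg 0 ⟨le_rfl, zero_le_one⟩
    calc a * (1 + c / 2) + (-(a * c)) * t
        = Real.exp (-(c / 2)) * (1 + c / 2 - c * t) * q 0 := by ring
      _ ≤ Real.exp (-(c * t)) * q 0 := mul_le_mul_of_nonneg_right htan hq0
      _ ≤ Real.exp (-(c * t)) * ((1 + c * t) * q t) :=
        mul_le_mul_of_nonneg_left (h t ht) (Real.exp_pos _).le
      _ = Real.exp (-(c * t)) * (1 + c * t) * q t := by ring
      _ ≤ q t := mul_le_of_le_one_left (hq_nonneg t ht) hinv
  calc a = a * (1 + c / 2) + (-(a * c)) / 2 := by ring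
    _ = ∫ t in (0 : ℝ)..1, (a * (1 + c / 2) + (-(a * c)) * t) :=
        (integral_affine_unitInterval _ _).symm
    _ ≤ ∫ t in (0 : ℝ)..1, q t :=
        integral_mono_on zero_le_one ((by fun_prop : Continuous _).intervalIntegrable _ _)
          (hq.intervalIntegrable _ _) hpt

end Integral

section Hessian

variable {n : ℕ} {f : (Fin n → ℝ) → ℝ}

noncomputable def hessAvg (f : (Fin n → ℝ) → ℝ) (x u : Fin n → ℝ) : Matrix (Fin n) (Fin n) ℝ :=
  Matrix.of fun i j => ∫ t in (0 : ℝ)..1, hessF f (x + t • u) i j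

theorem continuous_hessF (hf : ContDiff ℝ 2 f) : Continuous (hessF f) := by
  have h1 : ContDiff ℝ 1 (fderiv ℝ f) := hf.fderiv_right (by norm_num)
  have h : Continuous (fderiv ℝ (fderiv ℝ f)) := h1.continuous_fderiv (by norm_num)
  exact continuous_pi fun i => continuous_pi fun j =>
    (h.clm_apply continuous_const).clm_apply continuous_const

theorem hessAvg_isHermitian (hH : ∀ y, (hessF f y).IsHermitian) (x u : Fin n → ℝ) :
    (hessAvg f x u).IsHermitian := by
  ext i j
  simp only [hessAvg, conjTranspose_apply, of_apply, star_trivial]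
  congr 1 with t
  simpa using (hH (x + t • u)).apply i j

theorem dotProduct_hessAvg_mulVec (hc : Continuous (hessF f)) (x u v : Fin n → ℝ) :
    v ⬝ᵥ hessAvg f x u *ᵥ v = ∫ t in (0 : ℝ)..1, v ⬝ᵥ hessF f (x + t • u) *ᵥ v := by
  have hent i j : Continuous fun t : ℝ => hessF f (x + t • u) i j :=
    ((continuous_apply j).comp (continuous_apply i)).comp (hc.comp (by fun_prop))
  simp only [dotProduct, mulVec, hessAvg, of_apply]
  rw [intervalIntegral.integral_finsetSum fun i _ =>
    Continuous.intervalIntegrable (by fun_prop) _ _]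
  refine sum_congr rfl fun i _ => ?_
  rw [intervalIntegral.integral_const_mul,
    intervalIntegral.integral_finsetSum fun j _ => Continuous.intervalIntegrable (by fun_prop) _ _]
  simp only [intervalIntegral.integral_mul_const]

theorem hessAvg_add_neg (x u : Fin n → ℝ) : hessAvg f (x + u) (-u) = hessAvg f x u := by
  ext i j
  have h (t : ℝ) : x + u + t • -u = x + (1 - t) • u := by
    rw [sub_smul, one_smul, smul_neg]; abel
  simp only [hessAvg, of_apply, h]
  simpa using intervalIntegral.integral_comp_sub_left (a := 0) (b := 1)
    (fun t => hessF f (x + t • u) i j) 1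

theorem StronglySelfConcordant.dotProduct_hessF_mulVec_le {M : ℝ}
    (hssc : StronglySelfConcordant f M) (x y z v : Fin n → ℝ) :
    v ⬝ᵥ hessF f y *ᵥ v ≤
      (1 + M * √((y - x) ⬝ᵥ hessF f z *ᵥ (y - x))) * (v ⬝ᵥ hessF f x *ᵥ v) := by
  have h := Matrix.dotProduct_mulVec_le_of_le (psdLE_iff_le.mp (hssc x y z x)) v
  simp only [sub_mulVec, dotProduct_sub, smul_mulVec, dotProduct_smul, smul_eq_mul] at h
  linarith

theorem loewnerBetween_hessAvg (hc : Continuous (hessF f)) (hpsd : ∀ y, (hessF f y).PosSemidef)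
    {M : ℝ} (hssc : StronglySelfConcordant f M) (x u z : Fin n → ℝ) :
    LoewnerBetween (Real.exp (M * √(u ⬝ᵥ hessF f z *ᵥ u) / 2))⁻¹
      (Real.exp (M * √(u ⬝ᵥ hessF f z *ᵥ u) / 2)) (hessF f x) (hessAvg f x u) := by
  set s := M * √(u ⬝ᵥ hessF f z *ᵥ u)
  rw [LoewnerBetween.iff_dotProduct_mulVec (hpsd x).isHermitian
    (hessAvg_isHermitian (fun y => (hpsd y).isHermitian) x u)]
  intro v
  set q : ℝ → ℝ := fun t => v ⬝ᵥ hessF f (x + t • u) *ᵥ v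
  have hq : Continuous q :=
    continuous_const.dotProduct ((hc.comp (by fun_prop)).matrix_mulVec continuous_const)
  have hq0 : q 0 = v ⬝ᵥ hessF f x *ᵥ v := by simp [q]
  have hqnn t : 0 ≤ q t := by simpa using (hpsd _).dotProduct_mulVec_nonneg v
  have hnorm (t : ℝ) (ht : t ∈ Set.Icc (0 : ℝ) 1) :
      M * √((t • u) ⬝ᵥ hessF f z *ᵥ (t • u)) = s * t := by
    rw [sqrt_dotProduct_smul_mulVec, abs_of_nonneg ht.1]; ring
  have hup : ∀ t ∈ Set.Icc (0 : ℝ) 1, q t ≤ (1 + s * t) * q 0 := fun t ht => by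
    have h := hssc.dotProduct_hessF_mulVec_le x (x + t • u) z v
    rwa [add_sub_cancel_left, hnorm t ht, ← hq0] at h
  have hlow : ∀ t ∈ Set.Icc (0 : ℝ) 1, q 0 ≤ (1 + s * t) * q t := fun t ht => by
    have h := hssc.dotProduct_hessF_mulVec_le (x + t • u) x z v
    rwa [sub_add_cancel_left, ← neg_smul, sqrt_dotProduct_smul_mulVec, abs_neg,
      ← sqrt_dotProduct_smul_mulVec, hnorm t ht, ← hq0] at h
  rw [dotProduct_hessAvg_mulVec hc, ← hq0, ← Real.exp_neg]
  refine ⟨exp_neg_half_mul_le_integral_unitInterval hq (fun t _ => hqnn t) hlow, ?_⟩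
  calc ∫ t in (0 : ℝ)..1, q t ≤ (1 + s / 2) * q 0 :=
        integral_unitInterval_le_of_le_one_add_mul hq hup
    _ ≤ Real.exp (s / 2) * q 0 :=
        mul_le_mul_of_nonneg_right (by linarith [Real.add_one_le_exp (s / 2)]) (hqnn 0)

theorem loewnerBetween_hessAvg_add (hc : Continuous (hessF f))
    (hpsd : ∀ y, (hessF f y).PosSemidef) {M : ℝ} (hssc : StronglySelfConcordant f M)
    (x u z : Fin n → ℝ) :
    LoewnerBetween (Real.exp (M * √(u ⬝ᵥ hessF f z *ᵥ u) / 2))⁻¹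
      (Real.exp (M * √(u ⬝ᵥ hessF f z *ᵥ u) / 2)) (hessF f (x + u)) (hessAvg f x u) := by
  simpa [hessAvg_add_neg, mulVec_neg] using loewnerBetween_hessAvg hc hpsd hssc (x + u) (-u) z

end Hessian

theorem loewnerBetween_broyd_iterate {n : ℕ} {H J G : ℕ → Matrix (Fin n) (Fin n) ℝ}
    {u : ℕ → Fin n → ℝ} {τ e ξ : ℕ → ℝ} {κ : ℝ} (hH : ∀ k, (H k).PosDef)
    (hτ : ∀ k, τ k ∈ Set.Icc (0 : ℝ) 1) (he : ∀ k, 1 ≤ e k) (hκ : 1 ≤ κ)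
    (hJ : ∀ k, LoewnerBetween (e k)⁻¹ (e k) (H k) (J k))
    (hJ' : ∀ k, LoewnerBetween (e k)⁻¹ (e k) (H (k + 1)) (J k))
    (hG0 : LoewnerBetween 1 κ (H 0) (G 0))
    (hG : ∀ k, G (k + 1) = broyd (τ k) (J k) (G k) (u k))
    (hξ0 : ξ 0 = 1) (hξ : ∀ k, ξ (k + 1) = ξ k * e k ^ 2) (k : ℕ) :
    LoewnerBetween (ξ k)⁻¹ (ξ k * κ) (H k) (G k) ∧
      LoewnerBetween (ξ (k + 1))⁻¹ (ξ (k + 1) * κ) (J k) (G k) := by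
  have he0 k : 0 < e k := zero_lt_one.trans_le (he k)
  have hξ1 k : 1 ≤ ξ k := by
    induction k with
    | zero => exact hξ0.ge
    | succ k ih => rw [hξ]; exact one_le_mul_of_one_le_of_one_le ih (one_le_pow₀ (he k))
  have hξe1 k : 1 ≤ ξ k * e k := one_le_mul_of_one_le_of_one_le (hξ1 k) (he k)
  have hJpos k : (J k).PosDef := (hJ k).posDef (hH k) (inv_pos.2 (he0 k))
  have hJG k (h : LoewnerBetween (ξ k)⁻¹ (ξ k * κ) (H k) (G k)) :
      LoewnerBetween (ξ k * e k)⁻¹ (ξ k * e k * κ) (J k) (G k) := by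
    have hξpos : 0 < ξ k := zero_lt_one.trans_le (hξ1 k)
    convert ((hJ k).symm (inv_pos.2 (he0 k)) (he0 k)).trans h (by positivity) (by positivity)
      using 1 <;> field_simp
  have hHG k : LoewnerBetween (ξ k)⁻¹ (ξ k * κ) (H k) (G k) := by
    induction k with
    | zero => simpa [hξ0] using hG0
    | succ k ih =>
      have hGk := (hJG k ih).broyd (u := u k) (hJpos k)
        (ih.posDef (hH k) (inv_pos.2 (zero_lt_one.trans_le (hξ1 k)))) (hτ k)
        (inv_nonneg.2 (zero_le_one.trans (hξe1 k))) (inv_le_one_of_one_le₀ (hξe1 k))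
        (one_le_mul_of_one_le_of_one_le (hξe1 k) hκ)
      rw [← hG k] at hGk
      have hξe0 : 0 < ξ k * e k := zero_lt_one.trans_le (hξe1 k)
      convert (hJ' k).trans hGk (by positivity) (by positivity) using 1 <;> rw [hξ] <;>
        field_simp
  have hξe : ξ k * e k ≤ ξ (k + 1) := by
    rw [hξ, sq, ← mul_assoc]
    exact le_mul_of_one_le_right (zero_le_one.trans (hξe1 k)) (he k)
  exact ⟨hHG k, (hJG k (hHG k)).mono (hJpos k).posSemidef.nonneg
    (inv_anti₀ (zero_lt_one.trans_le (hξe1 k)) hξe)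
    (mul_le_mul_of_nonneg_right hξe (zero_le_one.trans hκ))⟩

theorem gen_scheme_eig_bounds_general {n : ℕ} (hn : 1 ≤ n)
    (f : (Fin n → ℝ) → ℝ) (hf : ContDiff ℝ 2 f)
    (hpos : ∀ x, (hessF f x).PosDef)
    (B : Matrix (Fin n) (Fin n) ℝ) (hB : B.PosDef)
    (μ L M : ℝ) (hμ : 0 < μ) (hM : 0 ≤ M)
    (hμB : ∀ x, psdLE (μ • B) (hessF f x)) (hLB : ∀ x, psdLE (hessF f x) (L • B))
    (hssc : StronglySelfConcordant f M)
    (τ : ℕ → ℝ) (hτ : ∀ k, τ k ∈ Set.Icc (0 : ℝ) 1)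
    (x : ℕ → Fin n → ℝ) (G : ℕ → Matrix (Fin n) (Fin n) ℝ)
    (u : ℕ → Fin n → ℝ) (J : ℕ → Matrix (Fin n) (Fin n) ℝ)
    (hG0 : G 0 = L • B)
    (hu : ∀ k, u k = x (k + 1) - x k)
    (hJ : ∀ k, J k = Matrix.of fun i j => ∫ t in (0:ℝ)..1, hessF f (x k + t • u k) i j)
    (hGrec : ∀ k, G (k + 1) = broyd (τ k) (J k) (G k) (u k))
    (r : ℕ → ℝ) (hr : ∀ k, r k = Real.sqrt (u k ⬝ᵥ (hessF f (x k)).mulVec (u k)))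
    (ξ : ℕ → ℝ) (hξ : ∀ k, ξ k = Real.exp (M * ∑ i ∈ Finset.range k, r i))
    (k : ℕ) :
    (psdLE ((ξ k)⁻¹ • hessF f (x k)) (G k) ∧
      psdLE (G k) ((ξ k * (L / μ)) • hessF f (x k))) ∧
    (psdLE ((ξ (k + 1))⁻¹ • J k) (G k) ∧
      psdLE (G k) ((ξ (k + 1) * (L / μ)) • J k)) := by
  have : Nonempty (Fin n) := ⟨⟨0, hn⟩⟩
  simp only [psdLE_iff_le] at hμB hLB ⊢
  have hLμ : 1 ≤ L / μ :=
    (one_le_div hμ).2 (hB.le_of_smul_le_smul ((hμB (x 0)).trans (hLB (x 0))))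
  have hc := continuous_hessF hf
  have hpsd y := (hpos y).posSemidef
  have hJavg k : J k = hessAvg f (x k) (u k) := hJ k
  have hxu k : x (k + 1) = x k + u k := by rw [hu]; abel
  have hG0_between : LoewnerBetween 1 (L / μ) (hessF f (x 0)) (G 0) := by
    rw [hG0]
    refine ⟨by simpa using hLB (x 0), ?_⟩
    simpa [smul_smul, hμ.ne'] using
      smul_le_smul_of_nonneg_left (hμB (x 0)) (zero_le_one.trans hLμ)
  have hξ_succ k : ξ (k + 1) = ξ k * Real.exp (M * r k / 2) ^ 2 := by
    rw [hξ, hξ, sum_range_succ, mul_add, Real.exp_add, sq, ← Real.exp_add (M * r k / 2),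
      add_halves]
  exact loewnerBetween_broyd_iterate (fun k => hpos (x k)) hτ
    (fun k => Real.one_le_exp (by rw [hr]; positivity)) hLμ
    (fun k => by rw [hJavg, hr]; exact loewnerBetween_hessAvg hc hpsd hssc _ _ _)
    (fun k => by rw [hJavg, hr, hxu]; exact loewnerBetween_hessAvg_add hc hpsd hssc _ _ _)
    hG0_between hGrec (by simp [hξ]) hξ_succ k

theorem gen_scheme_eig_bounds {n : ℕ} (hn : 1 ≤ n)
    (f : (Fin n → ℝ) → ℝ) (hf : ContDiff ℝ 2 f)
    (hpos : ∀ x, (hessF f x).PosDef)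
    (B : Matrix (Fin n) (Fin n) ℝ) (hB : B.PosDef)
    (μ L M : ℝ) (hμ : 0 < μ) (hL : 0 < L) (hM : 0 ≤ M)
    (hμB : ∀ x, psdLE (μ • B) (hessF f x)) (hLB : ∀ x, psdLE (hessF f x) (L • B))
    (hssc : StronglySelfConcordant f M)
    (τ : ℕ → ℝ) (hτ : ∀ k, τ k ∈ Set.Icc (0 : ℝ) 1)
    (x : ℕ → Fin n → ℝ) (G : ℕ → Matrix (Fin n) (Fin n) ℝ)
    (u : ℕ → Fin n → ℝ) (J : ℕ → Matrix (Fin n) (Fin n) ℝ)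
    (hG0 : G 0 = L • B)
    (hx : ∀ k, x (k + 1) = x k - (G k)⁻¹.mulVec (gradF f (x k)))
    (hu : ∀ k, u k = x (k + 1) - x k)
    (hJ : ∀ k, J k = Matrix.of fun i j => ∫ t in (0:ℝ)..1, hessF f (x k + t • u k) i j)
    (hGrec : ∀ k, G (k + 1) = broyd (τ k) (J k) (G k) (u k))
    (r : ℕ → ℝ) (hr : ∀ k, r k = Real.sqrt (u k ⬝ᵥ (hessF f (x k)).mulVec (u k)))
    (ξ : ℕ → ℝ) (hξ : ∀ k, ξ k = Real.exp (M * ∑ i ∈ Finset.range k, r i))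
    (lam : ℕ → ℝ)
    (hlam : ∀ k, lam k =
      Real.sqrt (gradF f (x k) ⬝ᵥ (hessF f (x k))⁻¹.mulVec (gradF f (x k))))
    (k : ℕ) :
    (psdLE ((ξ k)⁻¹ • hessF f (x k)) (G k) ∧
      psdLE (G k) ((ξ k * (L / μ)) • hessF f (x k))) ∧
    (psdLE ((ξ (k + 1))⁻¹ • J k) (G k) ∧
      psdLE (G k) ((ξ (k + 1) * (L / μ)) • J k)) :=
  gen_scheme_eig_bounds_general hn f hf hpos B hB μ L M hμ hM hμB hLB hssc τ hτ x G u J hG0 hu hJ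
    hGrec r hr ξ hξ k
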